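/- Let K be a field and let C be a connected graded K-algebra generated in degree 1 that is the internal direct sum C = A ⊓ B of graded subalgebras A and B. Let F be a Koszul filtration of A and G a Koszul filtration of B. Then the collection H = F ⊓ G = { I_A^e + I_B^e : I_A ∈ F, I_B ∈ G }, where I_A^e (resp. I_B^e) denotes the left ideal of C generated by I_A (resp. I_B), is a Koszul filtration of C. -/

import Mathlib

/-- The colon ideal `I : x = {a | a * x ∈ I}` of a left ideal `I` by an element `x`. -/
def colonIdeal {A : Type*} [Ring A] (I : Ideal A) (x : A) : Ideal A :=
  Submodule.comap (LinearMap.toSpanSingleton A A x) I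

/-- A left ideal is generated in degree 1, i.e. generated by a subset of the
degree-one component `D`. -/
def GenInDeg1 {A : Type*} [Ring A] (D : Set A) (I : Ideal A) : Prop :=
  ∃ S ⊆ D, I = Ideal.span S

/-- The augmentation ideal `A_+` of a connected graded algebra. -/
def augIdeal {K A : Type*} [Field K] [Ring A] [Algebra K A]
    (𝒜 : ℕ → Submodule K A) : Ideal A :=
  Ideal.span (⋃ n : ℕ, ((𝒜 (n + 1) : Submodule K A) : Set A))

/-- A collection `F` of left ideals is a Koszul filtration (relative to the set `D` of
degree-one elements and the augmentation ideal `P`). -/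
def IsKoszulFiltration {A : Type*} [Ring A] (D : Set A) (P : Ideal A)
    (F : Set (Ideal A)) : Prop :=
  (∀ I ∈ F, GenInDeg1 D I) ∧ (⊥ : Ideal A) ∈ F ∧ P ∈ F ∧
    ∀ I ∈ F, I ≠ ⊥ →
      ∃ J ∈ F, J ≠ I ∧ ∃ x ∈ D, I = J ⊔ Ideal.span {x} ∧ colonIdeal J x ∈ F

section Helpers

variable {K C : Type*} [Field K] [Ring C] [Algebra K C]
variable (𝒞 : ℕ → Submodule K C) [GradedAlgebra 𝒞]

/-- The ideal of elements with vanishing degree-zero component. -/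
def posIdeal : Ideal C := RingHom.ker (GradedRing.projZeroRingHom 𝒞)

lemma mem_posIdeal_iff {c : C} :
    c ∈ posIdeal 𝒞 ↔ ((DirectSum.decompose 𝒞 c 0 : 𝒞 0) : C) = 0 := by
  simp [posIdeal, RingHom.mem_ker, GradedRing.projZeroRingHom_apply]

lemma mem_posIdeal_of_mem {c : C} {n : ℕ} (hn : 1 ≤ n) (hc : c ∈ 𝒞 n) :
    c ∈ posIdeal 𝒞 := by
  rw [mem_posIdeal_iff]
  exact DirectSum.decompose_of_mem_ne 𝒞 hc (by omega)

lemma augIdeal_eq_posIdeal : augIdeal 𝒞 = posIdeal 𝒞 := by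
  classical
  apply le_antisymm
  · rw [augIdeal, Ideal.span_le]
    rintro c hc
    simp only [Set.mem_iUnion, SetLike.mem_coe] at hc
    obtain ⟨n, hn⟩ := hc
    exact mem_posIdeal_of_mem 𝒞 (by omega) hn
  · intro c hc
    rw [mem_posIdeal_iff] at hc
    have hs := DirectSum.sum_support_decompose 𝒞 c
    rw [← hs]
    apply Ideal.sum_mem
    intro i hi
    rcases Nat.eq_zero_or_pos i with h0 | h1
    · subst h0; rw [hc]; exact (augIdeal 𝒞).zero_mem
    · apply Ideal.subset_span
      rw [Set.mem_iUnion]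
      exact ⟨i - 1, by
        rw [SetLike.mem_coe]
        have := SetLike.coe_mem (DirectSum.decompose 𝒞 c i)
        rwa [show i - 1 + 1 = i by omega]⟩

/-- Span in `C` of the image of a span in a subalgebra. -/
lemma span_image_span (S : Subalgebra K C) (T : Set S) :
    Ideal.span (Subtype.val '' ((Ideal.span T : Ideal S) : Set S))
      = Ideal.span (Subtype.val '' T) := by
  apply le_antisymm
  · rw [Ideal.span_le]
    rintro _ ⟨a, ha, rfl⟩
    induction ha using Submodule.span_induction with
    | mem v hv => exact Ideal.subset_span ⟨v, hv, rfl⟩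
    | zero => simp
    | add u v _ _ hu hv => simpa using (Ideal.span _).add_mem hu hv
    | smul r v _ hv =>
        have : ((r • v : S) : C) = (r : C) * (v : C) := rfl
        rw [this]
        exact Ideal.mul_mem_left _ _ hv
  · apply Ideal.span_mono
    exact Set.image_mono (Ideal.subset_span)

lemma mem_span_image {S : Subalgebra K C} {T : Set S} {a : S} (ha : a ∈ Ideal.span T) :
    (a : C) ∈ Ideal.span (Subtype.val '' T) := by
  rw [← span_image_span]
  exact Ideal.subset_span ⟨a, ha, rfl⟩

end Helpers

section Decomp

variable {K C : Type*} [Field K] [Ring C] [Algebra K C]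
variable (𝒞 : ℕ → Submodule K C) [GradedAlgebra 𝒞]
variable (SA SB : Subalgebra K C)

lemma exists_decomp
    (hsum : ∀ n, 1 ≤ n →
      𝒞 n = (Subalgebra.toSubmodule SA ⊓ 𝒞 n) ⊔ (Subalgebra.toSubmodule SB ⊓ 𝒞 n))
    (c : C) :
    ∃ a b : C, a ∈ SA ∧ a ∈ posIdeal 𝒞 ∧ b ∈ SB ∧ b ∈ posIdeal 𝒞 ∧
      ∃ κ ∈ 𝒞 0, c = κ + a + b := by
  classical
  set T : Submodule K C := 𝒞 0 ⊔
    ((Subalgebra.toSubmodule SA ⊓ (posIdeal 𝒞).restrictScalars K) ⊔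
     (Subalgebra.toSubmodule SB ⊓ (posIdeal 𝒞).restrictScalars K)) with hT
  have hcT : c ∈ T := by
    rw [← DirectSum.sum_support_decompose 𝒞 c]
    apply Submodule.sum_mem
    intro i _
    rcases Nat.eq_zero_or_pos i with h0 | h1
    · subst h0
      exact Submodule.mem_sup_left (SetLike.coe_mem _)
    · have hmem : ((DirectSum.decompose 𝒞 c i : 𝒞 i) : C) ∈
        (Subalgebra.toSubmodule SA ⊓ 𝒞 i) ⊔ (Subalgebra.toSubmodule SB ⊓ 𝒞 i) := by
        rw [← hsum i h1]; exact SetLike.coe_mem _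
      obtain ⟨u, hu, v, hv, huv⟩ := Submodule.mem_sup.mp hmem
      apply Submodule.mem_sup_right
      rw [← huv]
      apply Submodule.add_mem
      · exact Submodule.mem_sup_left ⟨hu.1, mem_posIdeal_of_mem 𝒞 h1 hu.2⟩
      · exact Submodule.mem_sup_right ⟨hv.1, mem_posIdeal_of_mem 𝒞 h1 hv.2⟩
  obtain ⟨κ, hκ, y, hy, hc⟩ := Submodule.mem_sup.mp hcT
  obtain ⟨a, ha, b, hb, hy'⟩ := Submodule.mem_sup.mp hy
  exact ⟨a, b, ha.1, ha.2, hb.1, hb.2, κ, hκ, by rw [← hc, ← hy', add_assoc]⟩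

lemma disj_pos
    (hAhom : ∀ y ∈ SA, ∀ n : ℕ, ((DirectSum.decompose 𝒞 y n : 𝒞 n) : C) ∈ SA)
    (hBhom : ∀ y ∈ SB, ∀ n : ℕ, ((DirectSum.decompose 𝒞 y n : 𝒞 n) : C) ∈ SB)
    (hdisj : ∀ n, 1 ≤ n →
      (Subalgebra.toSubmodule SA ⊓ 𝒞 n) ⊓ (Subalgebra.toSubmodule SB ⊓ 𝒞 n) = ⊥)
    {a b : C} (haA : a ∈ SA) (hap : a ∈ posIdeal 𝒞)
    (hbB : b ∈ SB) (hbp : b ∈ posIdeal 𝒞) (hab : a + b = 0) :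
    a = 0 ∧ b = 0 := by
  classical
  have hba : b = -a := eq_neg_of_add_eq_zero_right hab
  have ha0 : a = 0 := by
    rw [← DirectSum.sum_support_decompose 𝒞 a]
    apply Finset.sum_eq_zero
    intro i _
    rcases Nat.eq_zero_or_pos i with h0 | h1
    · subst h0; exact (mem_posIdeal_iff 𝒞).mp hap
    · have h1' : ((DirectSum.decompose 𝒞 a i : 𝒞 i) : C) ∈
          (Subalgebra.toSubmodule SA ⊓ 𝒞 i) ⊓ (Subalgebra.toSubmodule SB ⊓ 𝒞 i) := by
        have haB : a ∈ SB := by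
          rw [show a = -b from eq_neg_of_add_eq_zero_left hab]
          exact neg_mem hbB
        exact ⟨⟨hAhom a haA i, SetLike.coe_mem _⟩, hBhom a haB i, SetLike.coe_mem _⟩
      rw [hdisj i h1] at h1'
      exact h1'
  exact ⟨ha0, by rw [hba, ha0, neg_zero]⟩

end Decomp

section More

variable {K C : Type*} [Field K] [Ring C] [Algebra K C]
variable (𝒞 : ℕ → Submodule K C) [GradedAlgebra 𝒞]

lemma mem_colonIdeal {A : Type*} [Ring A] {I : Ideal A} {x a : A} :
    a ∈ colonIdeal I x ↔ a * x ∈ I := by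
  simp [colonIdeal, Submodule.mem_comap, LinearMap.toSpanSingleton_apply, smul_eq_mul]

/-- If multiplication by any `c : C` on elements of `I` can be realized inside `S`,
then the image of `I` in `C` is already an ideal. -/
lemma span_image_eq_image {S : Subalgebra K C} {I : Ideal S}
    (hdec : ∀ (c : C) (v : S), v ∈ I → ∃ s : S, c * (v : C) = (s : C) * (v : C)) :
    (Ideal.span (Subtype.val '' (I : Set S)) : Set C) = Subtype.val '' (I : Set S) := by
  apply Set.Subset.antisymm
  · intro c hc
    rw [SetLike.mem_coe] at hc
    induction hc using Submodule.span_induction with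
    | mem v hv => exact hv
    | zero => exact ⟨0, I.zero_mem, rfl⟩
    | add u v _ _ hu hv =>
        obtain ⟨u', hu', rfl⟩ := hu
        obtain ⟨v', hv', rfl⟩ := hv
        exact ⟨u' + v', I.add_mem hu' hv', rfl⟩
    | smul r v _ hv =>
        obtain ⟨v', hv', rfl⟩ := hv
        obtain ⟨s, hs⟩ := hdec r v' hv'
        refine ⟨s * v', Ideal.mul_mem_left _ _ hv', ?_⟩
        rw [MulMemClass.coe_mul, ← hs, smul_eq_mul]
  · exact Ideal.subset_span

lemma pos_of_mem_span {S : Subalgebra K C} {T : Set S}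
    (hT : ∀ y ∈ T, (y : C) ∈ posIdeal 𝒞) {a : S} (ha : a ∈ Ideal.span T) :
    (a : C) ∈ posIdeal 𝒞 := by
  have h1 : Ideal.span (Subtype.val '' T) ≤ posIdeal 𝒞 := by
    rw [Ideal.span_le]
    rintro _ ⟨y, hy, rfl⟩
    exact hT y hy
  exact h1 (mem_span_image ha)

/-- A positive element of `S` lies in the extension of the augmentation ideal of `S`. -/
lemma mem_ext_pos {S : Subalgebra K C}
    (hhom : ∀ y ∈ S, ∀ n : ℕ, ((DirectSum.decompose 𝒞 y n : 𝒞 n) : C) ∈ S)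
    {b : C} (hbS : b ∈ S) (hbp : b ∈ posIdeal 𝒞) :
    b ∈ Ideal.span (Subtype.val ''
      ((Ideal.span {y : S | ∃ n : ℕ, (y : C) ∈ 𝒞 (n + 1)} : Ideal S) : Set S)) := by
  classical
  rw [span_image_span]
  rw [← DirectSum.sum_support_decompose 𝒞 b]
  apply Ideal.sum_mem
  intro i _
  rcases Nat.eq_zero_or_pos i with h0 | h1
  · subst h0
    rw [(mem_posIdeal_iff 𝒞).mp hbp]
    exact Ideal.zero_mem _
  · apply Ideal.subset_span
    refine ⟨⟨((DirectSum.decompose 𝒞 b i : 𝒞 i) : C), hhom b hbS i⟩, ⟨i - 1, ?_⟩, rfl⟩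
    show ((DirectSum.decompose 𝒞 b i : 𝒞 i) : C) ∈ 𝒞 (i - 1 + 1)
    rw [show i - 1 + 1 = i by omega]
    exact SetLike.coe_mem _

end More

/-- Extension of an ideal of a subalgebra to the ambient algebra. -/
def extIdeal {K C : Type*} [Field K] [Ring C] [Algebra K C]
    (S : Subalgebra K C) (I : Ideal S) : Ideal C :=
  Ideal.span (Subtype.val '' (I : Set S))

section Step

variable {K C : Type*} [Field K] [Ring C] [Algebra K C]
variable (𝒞 : ℕ → Submodule K C) [GradedAlgebra 𝒞]

lemma extIdeal_sup {K C : Type*} [Field K] [Ring C] [Algebra K C]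
    (S : Subalgebra K C) (I J : Ideal S) :
    extIdeal S (I ⊔ J) = extIdeal S I ⊔ extIdeal S J := by
  apply le_antisymm
  · rw [extIdeal, Ideal.span_le]
    rintro _ ⟨a, ha, rfl⟩
    rw [SetLike.mem_coe] at ha
    obtain ⟨y, hy, z, hz, rfl⟩ := Submodule.mem_sup.mp ha
    have hyz : ((y + z : ↥S) : C) = (y : C) + (z : C) := rfl
    rw [hyz]
    exact Submodule.add_mem _
      (Submodule.mem_sup_left (Ideal.subset_span ⟨y, hy, rfl⟩))
      (Submodule.mem_sup_right (Ideal.subset_span ⟨z, hz, rfl⟩))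
  · apply sup_le
    · rw [extIdeal, Ideal.span_le]
      rintro _ ⟨a, ha, rfl⟩
      exact Ideal.subset_span ⟨a, Submodule.mem_sup_left ha, rfl⟩
    · rw [extIdeal, Ideal.span_le]
      rintro _ ⟨a, ha, rfl⟩
      exact Ideal.subset_span ⟨a, Submodule.mem_sup_right ha, rfl⟩

lemma extIdeal_span_singleton {K C : Type*} [Field K] [Ring C] [Algebra K C]
    (S : Subalgebra K C) (x : S) :
    extIdeal S (Ideal.span {x}) = Ideal.span {(x : C)} := by
  rw [extIdeal, span_image_span, Set.image_singleton]

lemma stmt8_step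
    (hconn : 𝒞 0 = 1)
    (SA SB : Subalgebra K C)
    (hAhom : ∀ y ∈ SA, ∀ n : ℕ, ((DirectSum.decompose 𝒞 y n : 𝒞 n) : C) ∈ SA)
    (hBhom : ∀ y ∈ SB, ∀ n : ℕ, ((DirectSum.decompose 𝒞 y n : 𝒞 n) : C) ∈ SB)
    (hsum : ∀ n, 1 ≤ n →
      𝒞 n = (Subalgebra.toSubmodule SA ⊓ 𝒞 n) ⊔ (Subalgebra.toSubmodule SB ⊓ 𝒞 n))
    (hdisj : ∀ n, 1 ≤ n →
      (Subalgebra.toSubmodule SA ⊓ 𝒞 n) ⊓ (Subalgebra.toSubmodule SB ⊓ 𝒞 n) = ⊥)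
    (hann : ∀ u ∈ SA, ∀ w ∈ SB,
      ((DirectSum.decompose 𝒞 u 0 : 𝒞 0) : C) = 0 →
      ((DirectSum.decompose 𝒞 w 0 : 𝒞 0) : C) = 0 → u * w = 0 ∧ w * u = 0)
    (F : Set (Ideal SA)) (G : Set (Ideal SB))
    (hF : IsKoszulFiltration {y : SA | (y : C) ∈ 𝒞 1}
      (Ideal.span {y : SA | ∃ n : ℕ, (y : C) ∈ 𝒞 (n + 1)}) F)
    (hG : IsKoszulFiltration {y : SB | (y : C) ∈ 𝒞 1}
      (Ideal.span {y : SB | ∃ n : ℕ, (y : C) ∈ 𝒞 (n + 1)}) G)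
    (IA : Ideal SA) (hIAF : IA ∈ F) (IB : Ideal SB) (hIBG : IB ∈ G) (hIAne : IA ≠ ⊥) :
    ∃ J ∈ {I : Ideal C | ∃ IA ∈ F, ∃ IB ∈ G, I = extIdeal SA IA ⊔ extIdeal SB IB},
      J ≠ extIdeal SA IA ⊔ extIdeal SB IB ∧
      ∃ x ∈ ((𝒞 1 : Submodule K C) : Set C),
        extIdeal SA IA ⊔ extIdeal SB IB = J ⊔ Ideal.span {x} ∧
        colonIdeal J x ∈
          {I : Ideal C | ∃ IA ∈ F, ∃ IB ∈ G, I = extIdeal SA IA ⊔ extIdeal SB IB} := by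
  obtain ⟨JA, hJAF, hJAne, x, hxD, hIAeq, hcolF⟩ := hF.2.2.2 IA hIAF hIAne
  have hxD' : (x : C) ∈ 𝒞 1 := hxD
  have hxpos : (x : C) ∈ posIdeal 𝒞 := mem_posIdeal_of_mem 𝒞 le_rfl hxD'
  -- positivity of members of ideals in F resp. G
  have posF : ∀ I ∈ F, ∀ a ∈ I, (a : C) ∈ posIdeal 𝒞 := by
    intro I hI a ha
    obtain ⟨T, hT, rfl⟩ := hF.1 I hI
    exact pos_of_mem_span 𝒞 (fun y hy => mem_posIdeal_of_mem 𝒞 le_rfl (hT hy)) ha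
  have posG : ∀ I ∈ G, ∀ b ∈ I, (b : C) ∈ posIdeal 𝒞 := by
    intro I hI b hb
    obtain ⟨T, hT, rfl⟩ := hG.1 I hI
    exact pos_of_mem_span 𝒞 (fun y hy => mem_posIdeal_of_mem 𝒞 le_rfl (hT hy)) hb
  have posPB : ∀ b ∈ (Ideal.span {y : SB | ∃ n : ℕ, (y : C) ∈ 𝒞 (n + 1)} : Ideal SB),
      (b : C) ∈ posIdeal 𝒞 := by
    intro b hb
    refine pos_of_mem_span 𝒞 (fun y hy => ?_) hb
    obtain ⟨n, hn⟩ := hy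
    exact mem_posIdeal_of_mem 𝒞 (by omega) hn
  have p2z : ∀ {c : C}, c ∈ posIdeal 𝒞 → ((DirectSum.decompose 𝒞 c 0 : 𝒞 0) : C) = 0 :=
    fun h => (mem_posIdeal_iff 𝒞).mp h
  -- the disjointness helper
  have hdj : ∀ {a b : C}, a ∈ SA → a ∈ posIdeal 𝒞 → b ∈ SB → b ∈ posIdeal 𝒞 →
      a + b = 0 → a = 0 ∧ b = 0 :=
    fun ha hap hb hbp h => disj_pos 𝒞 SA SB hAhom hBhom hdisj ha hap hb hbp h
  -- κ-part lies in SA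
  have hκmem : ∀ {κ : C}, κ ∈ 𝒞 0 → κ ∈ SA := by
    intro κ hκ
    rw [hconn] at hκ
    obtain ⟨k, hk⟩ := Submodule.mem_one.mp hκ
    rw [← hk]; exact SA.algebraMap_mem k
  -- any c : C acts on positive elements of SA through SA
  have hdecA : ∀ (I : Ideal SA), I ∈ F → ∀ (c : C) (v : SA), v ∈ I →
      ∃ s : SA, c * (v : C) = (s : C) * (v : C) := by
    intro I hI c v hv
    obtain ⟨a, b, haA, hap, hbB, hbp, κ, hκ, hceq⟩ := exists_decomp 𝒞 SA SB hsum c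
    have hbv : b * (v : C) = 0 :=
      (hann (v : C) v.2 b hbB (p2z (posF I hI v hv)) (p2z hbp)).2
    refine ⟨⟨κ + a, SA.add_mem (hκmem hκ) haA⟩, ?_⟩
    show c * (v : C) = (κ + a) * (v : C)
    rw [hceq, add_mul, hbv, add_zero]
  have hdecB : ∀ (I : Ideal SB), I ∈ G → ∀ (c : C) (w : SB), w ∈ I →
      ∃ s : SB, c * (w : C) = (s : C) * (w : C) := by
    intro I hI c w hw
    obtain ⟨a, b, haA, hap, hbB, hbp, κ, hκ, hceq⟩ := exists_decomp 𝒞 SA SB hsum c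
    have haw : a * (w : C) = 0 :=
      (hann a haA (w : C) w.2 (p2z hap) (p2z (posG I hI w hw))).1
    have hκB : κ ∈ SB := by
      rw [hconn] at hκ
      obtain ⟨k, hk⟩ := Submodule.mem_one.mp hκ
      rw [← hk]; exact SB.algebraMap_mem k
    refine ⟨⟨κ + b, SB.add_mem hκB hbB⟩, ?_⟩
    show c * (w : C) = (κ + b) * (w : C)
    rw [hceq, add_mul, add_mul, haw, add_zero, add_mul]
  -- membership characterization in `extIdeal SA I1 ⊔ extIdeal SB IB`
  have hmem : ∀ I1 ∈ F, ∀ c : C, c ∈ extIdeal SA I1 ⊔ extIdeal SB IB ↔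
      ∃ a ∈ I1, ∃ b ∈ IB, (a : C) + (b : C) = c := by
    intro I1 hI1 c
    have hsA := span_image_eq_image (S := SA) (I := I1) (hdecA I1 hI1)
    have hsB := span_image_eq_image (S := SB) (I := IB) (hdecB IB hIBG)
    rw [Submodule.mem_sup]
    constructor
    · rintro ⟨y, hy, z, hz, rfl⟩
      have hy' : y ∈ (extIdeal SA I1 : Set C) := hy
      have hz' : z ∈ (extIdeal SB IB : Set C) := hz
      rw [extIdeal, hsA] at hy'
      rw [extIdeal, hsB] at hz'
      obtain ⟨a, ha, rfl⟩ := hy'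
      obtain ⟨b, hb, rfl⟩ := hz'
      exact ⟨a, ha, b, hb, rfl⟩
    · rintro ⟨a, ha, b, hb, rfl⟩
      exact ⟨a, Ideal.subset_span ⟨a, ha, rfl⟩, b, Ideal.subset_span ⟨b, hb, rfl⟩, rfl⟩
  refine ⟨extIdeal SA JA ⊔ extIdeal SB IB, ⟨JA, hJAF, IB, hIBG, rfl⟩, ?_, (x : C),
    hxD', ?_, ?_⟩
  -- J ≠ I
  · intro h
    apply hJAne
    apply le_antisymm
    · rw [hIAeq]; exact le_sup_left
    · intro a haIA
      have hmem1 : (a : C) ∈ extIdeal SA JA ⊔ extIdeal SB IB := by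
        rw [h]
        exact Submodule.mem_sup_left (Ideal.subset_span ⟨a, haIA, rfl⟩)
      obtain ⟨a', ha', b', hb', heq⟩ := (hmem JA hJAF _).mp hmem1
      have h0 : ((a' : C) - (a : C)) + (b' : C) = 0 := by
        rw [sub_add_eq_add_sub, heq, sub_self]
      have hz := hdj (sub_mem a'.2 a.2)
        ((posIdeal 𝒞).sub_mem (posF JA hJAF a' ha') (posF IA hIAF a haIA))
        b'.2 (posG IB hIBG b' hb') h0
      have : (a : C) = (a' : C) := by
        have := sub_eq_zero.mp hz.1
        exact this.symm
      have haa : a = a' := Subtype.ext this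
      rw [haa]; exact ha'
  -- I = J ⊔ (x)
  · have hext : extIdeal SA IA = extIdeal SA JA ⊔ Ideal.span {(x : C)} := by
      rw [hIAeq, extIdeal_sup, extIdeal_span_singleton]
    rw [hext]
    exact sup_right_comm _ _ _
  -- the colon ideal
  · have hcoleq : colonIdeal (extIdeal SA JA ⊔ extIdeal SB IB) (x : C)
        = extIdeal SA (colonIdeal JA x)
          ⊔ extIdeal SB (Ideal.span {y : SB | ∃ n : ℕ, (y : C) ∈ 𝒞 (n + 1)}) := by
      apply le_antisymm
      · intro c hc
        rw [mem_colonIdeal] at hc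
        obtain ⟨a, b, haA, hap, hbB, hbp, κ, hκ, hceq⟩ := exists_decomp 𝒞 SA SB hsum c
        set u : SA := ⟨κ + a, SA.add_mem (hκmem hκ) haA⟩ with hu
        have hbx : b * (x : C) = 0 :=
          (hann (x : C) x.2 b hbB (p2z hxpos) (p2z hbp)).2
        have hcx : c * (x : C) = ((u * x : SA) : C) := by
          rw [hceq, add_mul, hbx, add_zero, MulMemClass.coe_mul]
        rw [hcx] at hc
        obtain ⟨a', ha', b', hb', heq⟩ := (hmem JA hJAF _).mp hc
        have huxpos : ((u * x : SA) : C) ∈ posIdeal 𝒞 := by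
          rw [MulMemClass.coe_mul]
          exact Ideal.mul_mem_left _ _ hxpos
        have h0 : (((u * x : SA) : C) - (a' : C)) + (-(b' : C)) = 0 := by
          rw [← heq]; abel
        have hz := hdj (sub_mem (u * x).2 a'.2)
          ((posIdeal 𝒞).sub_mem huxpos (posF JA hJAF a' ha'))
          (neg_mem b'.2) ((posIdeal 𝒞).neg_mem (posG IB hIBG b' hb')) h0
        have hux : u * x = a' := Subtype.ext (sub_eq_zero.mp hz.1)
        have humem : u ∈ colonIdeal JA x := by
          rw [mem_colonIdeal, hux]; exact ha'
        rw [hceq]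
        refine Submodule.add_mem _ (Submodule.mem_sup_left ?_)
          (Submodule.mem_sup_right (mem_ext_pos 𝒞 hBhom hbB hbp))
        exact Ideal.subset_span ⟨u, humem, rfl⟩
      · apply sup_le
        · rw [extIdeal, Ideal.span_le]
          rintro _ ⟨v, hv, rfl⟩
          rw [SetLike.mem_coe, mem_colonIdeal]
          have : (v : C) * (x : C) = ((v * x : SA) : C) := rfl
          rw [this]
          have hvx : v * x ∈ JA := mem_colonIdeal.mp hv
          exact Submodule.mem_sup_left (Ideal.subset_span ⟨v * x, hvx, rfl⟩)
        · rw [extIdeal, Ideal.span_le]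
          rintro _ ⟨w, hw, rfl⟩
          rw [SetLike.mem_coe, mem_colonIdeal]
          have hwx : (w : C) * (x : C) = 0 :=
            (hann (x : C) x.2 (w : C) w.2 (p2z hxpos) (p2z (posPB w hw))).2
          rw [hwx]
          exact Submodule.zero_mem _
    exact ⟨colonIdeal JA x, hcolF, _, hG.2.2.1, hcoleq⟩

end Step

lemma extIdeal_bot {K C : Type*} [Field K] [Ring C] [Algebra K C] (S : Subalgebra K C) :
    extIdeal S (⊥ : Ideal S) = ⊥ := by
  apply le_antisymm _ bot_le
  rw [extIdeal, Ideal.span_le]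
  rintro _ ⟨a, ha, rfl⟩
  rw [SetLike.mem_coe, Submodule.mem_bot] at ha
  subst ha
  simp

/-- Let `C = A ⊓ B` be the internal direct sum of graded subalgebras
`A` and `B`, let `F` be a Koszul filtration of `A` and `G` a Koszul filtration of `B`.
Then `H = F ⊓ G = { I_A^e + I_B^e : I_A ∈ F, I_B ∈ G }` (where `-^e` denotes extension
of ideals to `C`) is a Koszul filtration of `C`. -/
theorem stmt8 {K C : Type*} [Field K] [Ring C] [Algebra K C]
    (𝒞 : ℕ → Submodule K C) [GradedAlgebra 𝒞]
    (hconn : 𝒞 0 = 1)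
    (hgen : Algebra.adjoin K ((𝒞 1 : Submodule K C) : Set C) = ⊤)
    (SA SB : Subalgebra K C)
    (hAhom : ∀ y ∈ SA, ∀ n : ℕ, ((DirectSum.decompose 𝒞 y n : 𝒞 n) : C) ∈ SA)
    (hBhom : ∀ y ∈ SB, ∀ n : ℕ, ((DirectSum.decompose 𝒞 y n : 𝒞 n) : C) ∈ SB)
    (hAgen : Algebra.adjoin K ((SA : Set C) ∩ ((𝒞 1 : Submodule K C) : Set C)) = SA)
    (hBgen : Algebra.adjoin K ((SB : Set C) ∩ ((𝒞 1 : Submodule K C) : Set C)) = SB)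
    (hsum : ∀ n, 1 ≤ n →
      𝒞 n = (Subalgebra.toSubmodule SA ⊓ 𝒞 n) ⊔ (Subalgebra.toSubmodule SB ⊓ 𝒞 n))
    (hdisj : ∀ n, 1 ≤ n →
      (Subalgebra.toSubmodule SA ⊓ 𝒞 n) ⊓ (Subalgebra.toSubmodule SB ⊓ 𝒞 n) = ⊥)
    (hann : ∀ u ∈ SA, ∀ w ∈ SB,
      ((DirectSum.decompose 𝒞 u 0 : 𝒞 0) : C) = 0 →
      ((DirectSum.decompose 𝒞 w 0 : 𝒞 0) : C) = 0 → u * w = 0 ∧ w * u = 0)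
    (F : Set (Ideal SA)) (G : Set (Ideal SB))
    (hF : IsKoszulFiltration {y : SA | (y : C) ∈ 𝒞 1}
      (Ideal.span {y : SA | ∃ n : ℕ, (y : C) ∈ 𝒞 (n + 1)}) F)
    (hG : IsKoszulFiltration {y : SB | (y : C) ∈ 𝒞 1}
      (Ideal.span {y : SB | ∃ n : ℕ, (y : C) ∈ 𝒞 (n + 1)}) G) :
    IsKoszulFiltration ((𝒞 1 : Submodule K C) : Set C) (augIdeal 𝒞)
      {I : Ideal C | ∃ IA ∈ F, ∃ IB ∈ G,
        I = Ideal.span (Subtype.val '' (IA : Set SA))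
              ⊔ Ideal.span (Subtype.val '' (IB : Set SB))} := by
  classical
  show IsKoszulFiltration ((𝒞 1 : Submodule K C) : Set C) (augIdeal 𝒞)
      {I : Ideal C | ∃ IA ∈ F, ∃ IB ∈ G, I = extIdeal SA IA ⊔ extIdeal SB IB}
  refine ⟨?_, ?_, ?_, ?_⟩
  -- generated in degree 1
  · rintro I ⟨IA, hIAF, IB, hIBG, rfl⟩
    obtain ⟨TA, hTA, hTAeq⟩ := hF.1 IA hIAF
    obtain ⟨TB, hTB, hTBeq⟩ := hG.1 IB hIBG
    refine ⟨Subtype.val '' TA ∪ Subtype.val '' TB, ?_, ?_⟩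
    · rintro c (⟨y, hy, rfl⟩ | ⟨y, hy, rfl⟩)
      · exact hTA hy
      · exact hTB hy
    · have h1 : extIdeal SA IA = Ideal.span (Subtype.val '' TA) := by
        rw [hTAeq]; exact span_image_span SA TA
      have h2 : extIdeal SB IB = Ideal.span (Subtype.val '' TB) := by
        rw [hTBeq]; exact span_image_span SB TB
      rw [h1, h2, ← Ideal.span_union]
  -- ⊥ ∈ H
  · exact ⟨⊥, hF.2.1, ⊥, hG.2.1, by rw [extIdeal_bot, extIdeal_bot]; simp⟩
  -- augmentation ideal ∈ H
  · refine ⟨_, hF.2.2.1, _, hG.2.2.1, ?_⟩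
    rw [augIdeal_eq_posIdeal]
    apply le_antisymm
    · intro c hc
      obtain ⟨a, b, haA, hap, hbB, hbp, κ, hκ, hceq⟩ := exists_decomp 𝒞 SA SB hsum c
      have hκ0 : κ = 0 := by
        have h1 : GradedRing.projZeroRingHom 𝒞 c = 0 := RingHom.mem_ker.mp hc
        rw [hceq, map_add, map_add] at h1
        have hκπ : GradedRing.projZeroRingHom 𝒞 κ = κ := by
          rw [GradedRing.projZeroRingHom_apply]
          exact DirectSum.decompose_of_mem_same 𝒞 hκ
        rw [hκπ, RingHom.mem_ker.mp hap, RingHom.mem_ker.mp hbp, add_zero, add_zero] at h1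
        exact h1
      rw [hceq, hκ0, zero_add]
      exact Submodule.add_mem _
        (Submodule.mem_sup_left (mem_ext_pos 𝒞 hAhom haA hap))
        (Submodule.mem_sup_right (mem_ext_pos 𝒞 hBhom hbB hbp))
    · apply sup_le
      · rw [extIdeal, Ideal.span_le]
        rintro _ ⟨a, ha, rfl⟩
        refine pos_of_mem_span 𝒞 (fun y hy => ?_) ha
        obtain ⟨n, hn⟩ := hy
        exact mem_posIdeal_of_mem 𝒞 (by omega) hn
      · rw [extIdeal, Ideal.span_le]
        rintro _ ⟨b, hb, rfl⟩
        refine pos_of_mem_span 𝒞 (fun y hy => ?_) hb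
        obtain ⟨n, hn⟩ := hy
        exact mem_posIdeal_of_mem 𝒞 (by omega) hn
  -- the step condition
  · rintro I ⟨IA, hIAF, IB, hIBG, rfl⟩ hIne
    by_cases hIA : IA = ⊥
    · have hIB : IB ≠ ⊥ := by
        intro hIB
        apply hIne
        rw [hIA, hIB, extIdeal_bot, extIdeal_bot]
        simp
      have hsum' : ∀ n, 1 ≤ n → 𝒞 n =
          (Subalgebra.toSubmodule SB ⊓ 𝒞 n) ⊔ (Subalgebra.toSubmodule SA ⊓ 𝒞 n) :=
        fun n hn => by rw [sup_comm]; exact hsum n hn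
      have hdisj' : ∀ n, 1 ≤ n →
          (Subalgebra.toSubmodule SB ⊓ 𝒞 n) ⊓ (Subalgebra.toSubmodule SA ⊓ 𝒞 n) = ⊥ :=
        fun n hn => by rw [inf_comm]; exact hdisj n hn
      have hann' : ∀ u ∈ SB, ∀ w ∈ SA,
          ((DirectSum.decompose 𝒞 u 0 : 𝒞 0) : C) = 0 →
          ((DirectSum.decompose 𝒞 w 0 : 𝒞 0) : C) = 0 → u * w = 0 ∧ w * u = 0 :=
        fun u hu w hw h1 h2 => ⟨(hann w hw u hu h2 h1).2, (hann w hw u hu h2 h1).1⟩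
      obtain ⟨J, hJH, hJne, x, hx, heq, hcol⟩ :=
        stmt8_step 𝒞 hconn SB SA hBhom hAhom hsum' hdisj' hann' G F hG hF IB hIBG IA hIAF hIB
      refine ⟨J, ?_, ?_, x, hx, ?_, ?_⟩
      · obtain ⟨IB', h1, IA', h2, hJeq⟩ := hJH
        exact ⟨IA', h2, IB', h1, hJeq.trans (sup_comm _ _)⟩
      · rw [sup_comm (extIdeal SA IA)]; exact hJne
      · rw [sup_comm (extIdeal SA IA)]; exact heq
      · obtain ⟨IB', h1, IA', h2, hceq2⟩ := hcol
        exact ⟨IA', h2, IB', h1, hceq2.trans (sup_comm _ _)⟩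
    · exact stmt8_step 𝒞 hconn SA SB hAhom hBhom hsum hdisj hann F G hF hG IA hIAF IB hIBG hIA
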